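/- arXiv:1812.09916 — 2 statements merged into one kernel-verified Lean document; each statement's English description precedes it below -/
import Mathlib

section
/- Let H be a real Hilbert space and φ : ℝ^s → H a bounded strongly measurable map whose mean embedding P' ↦ ∫ φ dP' is injective on Borel probability measures on ℝ^s (the kernel k(a,b) = ⟨φ(a), φ(b)⟩ is characteristic). Let D : ℝ^d → ℝ^s be a measurable embedding (injective and measurable with measurable inverse on its range). For Borel probability measures P, Q on ℝ^d define M²_{k∘D}(P,Q) = ‖∫ (φ ∘ D) dP − ∫ (φ ∘ D) dQ‖²_H. Then M²_{k∘D}(P,Q) ≥ 0, with equality if and only if P = Q. -/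
open MeasureTheory

/-- For a characteristic kernel given by a bounded strongly measurable feature map `φ`
(whose mean embedding is injective on Borel probability measures) and an injective
measurable discriminator `D` with measurable inverse on its range, the squared MMD
`M²_{k∘D}(P,Q) = ‖∫ φ∘D dP − ∫ φ∘D dQ‖²` is nonnegative, and vanishes iff `P = Q`. -/
theorem mmd_composed_nonneg_and_eq_zero_iff
    {H : Type*} [NormedAddCommGroup H] [InnerProductSpace ℝ H] [CompleteSpace H]
    {s d : ℕ}
    (φ : (Fin s → ℝ) → H) (hφm : StronglyMeasurable φ)
    (hφb : ∃ C : ℝ, ∀ a, ‖φ a‖ ≤ C)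
    (hchar : ∀ P' Q' : Measure (Fin s → ℝ), IsProbabilityMeasure P' →
      IsProbabilityMeasure Q' → (∫ a, φ a ∂P') = ∫ a, φ a ∂Q' → P' = Q')
    (D : (Fin d → ℝ) → (Fin s → ℝ)) (hD : MeasurableEmbedding D)
    (P Q : Measure (Fin d → ℝ)) [IsProbabilityMeasure P] [IsProbabilityMeasure Q] :
    0 ≤ ‖(∫ x, φ (D x) ∂P) - ∫ x, φ (D x) ∂Q‖ ^ 2 ∧
      (‖(∫ x, φ (D x) ∂P) - ∫ x, φ (D x) ∂Q‖ ^ 2 = 0 ↔ P = Q) := by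
  refine ⟨by positivity, ?_⟩
  constructor
  · intro h
    have hnorm : ‖(∫ x, φ (D x) ∂P) - ∫ x, φ (D x) ∂Q‖ = 0 := by
      nlinarith [norm_nonneg ((∫ x, φ (D x) ∂P) - ∫ x, φ (D x) ∂Q)]
    have heq : (∫ x, φ (D x) ∂P) = ∫ x, φ (D x) ∂Q :=
      sub_eq_zero.mp (norm_eq_zero.mp hnorm)
    have hP : (∫ x, φ (D x) ∂P) = ∫ a, φ a ∂(P.map D) :=
      (integral_map hD.measurable.aemeasurable hφm.aestronglyMeasurable).symm
    have hQ : (∫ x, φ (D x) ∂Q) = ∫ a, φ a ∂(Q.map D) :=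
      (integral_map hD.measurable.aemeasurable hφm.aestronglyMeasurable).symm
    have hPm : IsProbabilityMeasure (P.map D) := Measure.isProbabilityMeasure_map hD.measurable.aemeasurable
    have hQm : IsProbabilityMeasure (Q.map D) := Measure.isProbabilityMeasure_map hD.measurable.aemeasurable
    have hmap : P.map D = Q.map D := hchar _ _ hPm hQm (by rw [← hP, ← hQ, heq])
    calc P = (P.map D).comap D := (hD.comap_map P).symm
      _ = (Q.map D).comap D := by rw [hmap]
      _ = Q := hD.comap_map Q
  · intro h; rw [h]; simp
end

section
/- Let α be a measurable space, k : α × α → ℝ a bounded measurable function, and P, Q Borel probability measures on α. Let n ≥ 2 and let X₁, …, Xₙ, Y₁, …, Yₙ be random variables on a probability space such that the whole family is independent, each Xᵢ has distribution P, and each Yᵢ has distribution Q. Then E[ (1/(n(n−1))) Σ_{i≠j} ( k(Xᵢ, Xⱼ) + k(Yᵢ, Yⱼ) − 2 k(Xᵢ, Yⱼ) ) ] = ∫∫ k d(P⊗P) + ∫∫ k d(Q⊗Q) − 2 ∫∫ k d(P⊗Q); that is, the estimator M̂_k² is an unbiased estimator of the squared MMD expressed through kernel expectations. -/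
/-!
For `i ≠ j` the pairs `(Xᵢ, Xⱼ)`, `(Yᵢ, Yⱼ)` and `(Xᵢ, Yⱼ)` consist of independent variables,
so their joint laws are `P ⊗ P`, `Q ⊗ Q` and `P ⊗ Q`. Every off-diagonal summand therefore
has expectation `∫ k d(P⊗P) + ∫ k d(Q⊗Q) − 2 ∫ k d(P⊗Q)`, and the estimator averages
exactly `n(n−1)` of them; boundedness of `k` makes all summands integrable.
-/

open MeasureTheory ProbabilityTheory Finset

namespace ProbabilityTheory

variable {Ω α β : Type*} [MeasurableSpace Ω] [MeasurableSpace α] [MeasurableSpace β]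
  {μ : Measure Ω}

theorem IndepFun.integral_comp_prodMk [IsFiniteMeasure μ] {f : Ω → α} {g : Ω → β}
    (hfg : IndepFun f g μ) (hf : AEMeasurable f μ) (hg : AEMeasurable g μ) {k : α × β → ℝ}
    (hk : AEStronglyMeasurable k ((μ.map f).prod (μ.map g))) :
    ∫ ω, k (f ω, g ω) ∂μ = ∫ p, k p ∂((μ.map f).prod (μ.map g)) := by
  rw [← hfg.map_prod_eq_prod_map_map hf hg] at hk ⊢
  exact (integral_map (hf.prodMk hg) hk).symm

end ProbabilityTheory

namespace MeasureTheory

variable {Ω ι : Type*} [MeasurableSpace Ω] {μ : Measure Ω}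

theorem integral_one_div_card_mul_sum_of_integral_eq {s : Finset ι} {F : ι → Ω → ℝ} {c : ℝ}
    (hs : s.Nonempty) (hF : ∀ i ∈ s, Integrable (F i) μ)
    (hFc : ∀ i ∈ s, ∫ ω, F i ω ∂μ = c) :
    ∫ ω, (1 / (#s : ℝ)) * ∑ i ∈ s, F i ω ∂μ = c := by
  have hcard : (#s : ℝ) ≠ 0 := by exact_mod_cast hs.card_ne_zero
  rw [integral_const_mul, integral_finsetSum s hF, sum_congr rfl hFc, sum_const, nsmul_eq_mul]
  field_simp

end MeasureTheory

theorem Finset.card_filter_fst_ne_snd (R ι : Type*) [CommRing R] [Fintype ι] [DecidableEq ι] :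
    (#(univ.filter fun p : ι × ι => p.1 ≠ p.2) : R) =
      Fintype.card ι * (Fintype.card ι - 1) := by
  have hoff : univ.filter (fun p : ι × ι => p.1 ≠ p.2) = (univ : Finset ι).offDiag := by
    ext p
    simp
  rw [hoff, offDiag_card, card_univ, Nat.cast_sub (Nat.le_mul_self _)]
  push_cast
  ring

theorem mmd_unbiased_estimator_general
    {α : Type*} [MeasurableSpace α]
    (k : α × α → ℝ) (hk : Measurable k) (hkb : ∃ C : ℝ, ∀ p, |k p| ≤ C)
    (P Q : Measure α)
    {Ω : Type*} [MeasurableSpace Ω] (μ : Measure Ω) [IsProbabilityMeasure μ]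
    (n : ℕ) (hn : 2 ≤ n)
    (X Y : Fin n → Ω → α)
    (hXm : ∀ i, Measurable (X i)) (hYm : ∀ i, Measurable (Y i))
    (hindep : iIndepFun (β := fun _ : (Fin n) ⊕ (Fin n) => α) (Sum.elim X Y) μ)
    (hX : ∀ i, μ.map (X i) = P) (hY : ∀ i, μ.map (Y i) = Q) :
    ∫ ω, (1 / ((n : ℝ) * ((n : ℝ) - 1))) *
        ∑ p ∈ Finset.univ.filter (fun p : Fin n × Fin n => p.1 ≠ p.2),
          (k (X p.1 ω, X p.2 ω) + k (Y p.1 ω, Y p.2 ω) - 2 * k (X p.1 ω, Y p.2 ω)) ∂μ =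
      (∫ p, k p ∂(P.prod P)) + (∫ p, k p ∂(Q.prod Q)) - 2 * ∫ p, k p ∂(P.prod Q) := by
  obtain ⟨C, hC⟩ := hkb
  have hint {f g : Ω → α} (hf : Measurable f) (hg : Measurable g) :
      Integrable (fun ω => k (f ω, g ω)) μ :=
    .of_bound (hk.comp (hf.prodMk hg)).aestronglyMeasurable C (.of_forall fun _ => hC _)
  let Z : Fin n ⊕ Fin n → Ω → α := Sum.elim X Y
  have hZm (a : Fin n ⊕ Fin n) : Measurable (Z a) := by cases a <;> simp [Z, hXm, hYm]
  have hpair {a b : Fin n ⊕ Fin n} (hab : a ≠ b) :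
      ∫ ω, k (Z a ω, Z b ω) ∂μ = ∫ p, k p ∂((μ.map (Z a)).prod (μ.map (Z b))) :=
    (hindep.indepFun hab).integral_comp_prodMk (hZm a).aemeasurable (hZm b).aemeasurable
      hk.aestronglyMeasurable
  have hnonempty : (univ.filter fun p : Fin n × Fin n => p.1 ≠ p.2).Nonempty :=
    ⟨(⟨0, by omega⟩, ⟨1, by omega⟩), by simp⟩
  have hcard := card_filter_fst_ne_snd ℝ (Fin n)
  rw [Fintype.card_fin] at hcard
  rw [← hcard]
  refine integral_one_div_card_mul_sum_of_integral_eq hnonempty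
    (fun p _ => ((hint (hXm p.1) (hXm p.2)).add (hint (hYm p.1) (hYm p.2))).sub
      ((hint (hXm p.1) (hYm p.2)).const_mul 2)) fun p hp => ?_
  have hne : p.1 ≠ p.2 := (mem_filter.mp hp).2
  have hXX := hpair (a := .inl p.1) (b := .inl p.2) (by simpa using hne)
  have hYY := hpair (a := .inr p.1) (b := .inr p.2) (by simpa using hne)
  have hXY := hpair (a := .inl p.1) (b := .inr p.2) Sum.inl_ne_inr
  simp only [Z, Sum.elim_inl, Sum.elim_inr, hX, hY] at hXX hYY hXY
  rw [integral_sub ((hint (hXm _) (hXm _)).fun_add (hint (hYm _) (hYm _)))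
      ((hint (hXm _) (hYm _)).const_mul 2),
    integral_add (hint (hXm _) (hXm _)) (hint (hYm _) (hYm _)), integral_const_mul, hXX, hYY, hXY]

/-- The estimator `M̂_k²` is an unbiased estimator of the squared MMD: for independent
samples `X₁,…,Xₙ ~ P` and `Y₁,…,Yₙ ~ Q` (the whole family independent), the expectation
of `(1/(n(n−1))) Σ_{i≠j} (k(Xᵢ,Xⱼ) + k(Yᵢ,Yⱼ) − 2 k(Xᵢ,Yⱼ))` equals
`∫∫ k d(P⊗P) + ∫∫ k d(Q⊗Q) − 2 ∫∫ k d(P⊗Q)`. -/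
theorem mmd_unbiased_estimator
    {α : Type*} [MeasurableSpace α]
    (k : α × α → ℝ) (hk : Measurable k) (hkb : ∃ C : ℝ, ∀ p, |k p| ≤ C)
    (P Q : Measure α) [IsProbabilityMeasure P] [IsProbabilityMeasure Q]
    {Ω : Type*} [MeasurableSpace Ω] (μ : Measure Ω) [IsProbabilityMeasure μ]
    (n : ℕ) (hn : 2 ≤ n)
    (X Y : Fin n → Ω → α)
    (hXm : ∀ i, Measurable (X i)) (hYm : ∀ i, Measurable (Y i))
    (hindep : iIndepFun (β := fun _ : (Fin n) ⊕ (Fin n) => α) (Sum.elim X Y) μ)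
    (hX : ∀ i, μ.map (X i) = P) (hY : ∀ i, μ.map (Y i) = Q) :
    ∫ ω, (1 / ((n : ℝ) * ((n : ℝ) - 1))) *
        ∑ p ∈ Finset.univ.filter (fun p : Fin n × Fin n => p.1 ≠ p.2),
          (k (X p.1 ω, X p.2 ω) + k (Y p.1 ω, Y p.2 ω) - 2 * k (X p.1 ω, Y p.2 ω)) ∂μ =
      (∫ p, k p ∂(P.prod P)) + (∫ p, k p ∂(Q.prod Q)) - 2 * ∫ p, k p ∂(P.prod Q) :=
  mmd_unbiased_estimator_general k hk hkb P Q μ n hn X Y hXm hYm hindep hX hY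
end
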